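/- arXiv:2603.25280 — 4 statements merged into one kernel-verified Lean document; each statement's English description precedes it below -/
import Mathlib

section
/- For a Gaussian density f of N(μ, Σ) on ℝ^d with Σ ≻ 0 and p = d/(d+2), the Zador functional (∫ f(x)^p dx)^{(d+2)/d} equals 2π · det(Σ)^{1/d} · ((d+2)/d)^{(d+2)/2}. -/
/-!
Write `Σ = A²` with `A = √Σ` symmetric. The substitution `x = μ + A y` turns `f ^ p` into
`Z ^ (-p) · √(det Σ) · exp (-(p/2) |y|²)`, where `Z = (2π)^(d/2) √(det Σ)` is the normalising
constant of `f`, and the isotropic Gaussian integral factorises over the coordinates. Hence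
`∫ f ^ p = Z ^ (1 - p) / p ^ (d/2)` for every `p > 0`. For `p = d/(d+2)` the outer exponent is
`1/p`, and `Z ^ ((1 - p)/p) = Z ^ (2/d) = 2π · det(Σ)^(1/d)`.
-/

open MeasureTheory Real Matrix
open scoped MatrixOrder

section

variable {ι : Type*} [Fintype ι]

theorem integral_exp_neg_mul_dotProduct_self {b : ℝ} (hb : 0 < b) :
    ∫ y : ι → ℝ, exp (-b * (y ⬝ᵥ y)) = (π / b) ^ ((Fintype.card ι : ℝ) / 2) := by
  have hprod : ∀ y : ι → ℝ, exp (-b * (y ⬝ᵥ y)) = ∏ i, exp (-b * y i ^ 2) := by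
    intro y
    simp only [dotProduct, Finset.mul_sum, ← exp_sum, sq]
  simp_rw [hprod]
  rw [integral_fintype_prod_volume_eq_prod (fun _ y => exp (-b * y ^ 2))]
  simp only [integral_gaussian, Finset.prod_const, Finset.card_univ]
  rw [sqrt_eq_rpow, ← rpow_natCast, ← rpow_mul (by positivity)]
  ring_nf

theorem mulVec_dotProduct_mulVec_mulVec (A B : Matrix ι ι ℝ) (y : ι → ℝ) :
    (A *ᵥ y) ⬝ᵥ B *ᵥ (A *ᵥ y) = y ⬝ᵥ (Aᵀ * B * A) *ᵥ y := by
  rw [mulVec_mulVec, ← vecMul_transpose A y, ← dotProduct_mulVec, mulVec_mulVec, Matrix.mul_assoc]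

variable [DecidableEq ι]

theorem integral_eq_abs_det_mul_integral_comp_mulVec {A : Matrix ι ι ℝ} (hA : A.det ≠ 0)
    (g : (ι → ℝ) → ℝ) :
    ∫ x, g x = |A.det| * ∫ y, g (A *ᵥ y) := by
  set L := LinearMap.toContinuousLinearMap A.mulVecLin
  have hinj : Function.Injective L :=
    mulVec_injective_iff_isUnit.mpr ((isUnit_iff_isUnit_det A).mpr hA.isUnit)
  have hsurj : Function.Surjective L := LinearMap.surjective_of_injective (f := A.mulVecLin) hinj
  have hdet : L.det = A.det := LinearMap.det_toLin' A
  have := integral_image_eq_integral_abs_det_fderiv_smul volume MeasurableSet.univ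
    (fun x _ => L.hasFDerivWithinAt) hinj.injOn g
  rwa [Set.image_univ_of_surjective hsurj, setIntegral_univ, setIntegral_univ, hdet,
    integral_smul] at this

theorem Matrix.PosDef.integral_comp_dotProduct_inv_mulVec {S : Matrix ι ι ℝ} (hS : S.PosDef)
    (g : ℝ → ℝ) :
    ∫ x : ι → ℝ, g (x ⬝ᵥ S⁻¹ *ᵥ x) = √S.det * ∫ y : ι → ℝ, g (y ⬝ᵥ y) := by
  set A := CFC.sqrt S
  have hAA : A * A = S := CFC.sqrt_mul_sqrt_self S hS.posSemidef.nonneg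
  have hAt : Aᵀ = A := (CFC.sqrt_nonneg S).posSemidef.isHermitian
  have hdetA : A.det = √S.det := by simpa using hS.posSemidef.det_sqrt
  have hunit : IsUnit A.det := by
    rw [hdetA]
    exact (sqrt_pos.mpr hS.det_pos).ne'.isUnit
  have hconj : Aᵀ * S⁻¹ * A = 1 := by
    rw [hAt, ← hAA, Matrix.mul_inv_rev, Matrix.mul_assoc, Matrix.mul_assoc,
      nonsing_inv_mul A hunit, Matrix.mul_one, mul_nonsing_inv A hunit]
  rw [integral_eq_abs_det_mul_integral_comp_mulVec hunit.ne_zero (fun x => g (x ⬝ᵥ S⁻¹ *ᵥ x)),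
    hdetA, abs_of_nonneg (sqrt_nonneg _)]
  simp_rw [mulVec_dotProduct_mulVec_mulVec, hconj, one_mulVec]

noncomputable def multivariateGaussianPDFReal (μ : ι → ℝ) (S : Matrix ι ι ℝ) (x : ι → ℝ) : ℝ :=
  (2 * π) ^ (-(Fintype.card ι : ℝ) / 2) * S.det ^ (-(1 : ℝ) / 2) *
    exp (-(1 / 2) * ((x - μ) ⬝ᵥ S⁻¹ *ᵥ (x - μ)))

theorem integral_multivariateGaussianPDFReal_rpow (μ : ι → ℝ) {S : Matrix ι ι ℝ} (hS : S.PosDef)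
    {p : ℝ} (hp : 0 < p) :
    ∫ x, multivariateGaussianPDFReal μ S x ^ p =
      ((2 * π) ^ ((Fintype.card ι : ℝ) / 2) * √S.det) ^ (1 - p) /
        p ^ ((Fintype.card ι : ℝ) / 2) := by
  set Z := (2 * π) ^ ((Fintype.card ι : ℝ) / 2) * √S.det
  have hZ : 0 < Z := by
    have := hS.det_pos
    positivity
  have hnorm : (2 * π) ^ (-(Fintype.card ι : ℝ) / 2) * S.det ^ (-(1 : ℝ) / 2) = Z⁻¹ := by
    rw [neg_div, neg_div, rpow_neg (by positivity), rpow_neg hS.det_pos.le, ← sqrt_eq_rpow,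
      mul_inv]
  have hpow : ∀ x, multivariateGaussianPDFReal μ S x ^ p =
      Z ^ (-p) * exp (-(p / 2) * ((x - μ) ⬝ᵥ S⁻¹ *ᵥ (x - μ))) := by
    intro x
    rw [multivariateGaussianPDFReal, hnorm, mul_rpow (by positivity) (exp_pos _).le, ← exp_mul,
      inv_rpow hZ.le, ← rpow_neg hZ.le]
    ring_nf
  simp_rw [hpow]
  rw [integral_const_mul,
    integral_sub_right_eq_self (fun x => exp (-(p / 2) * (x ⬝ᵥ S⁻¹ *ᵥ x))) μ,
    hS.integral_comp_dotProduct_inv_mulVec (fun t => exp (-(p / 2) * t)),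
    integral_exp_neg_mul_dotProduct_self (by positivity),
    show π / (p / 2) = 2 * π / p by field_simp, div_rpow (by positivity) hp.le,
    rpow_sub hZ, rpow_one, rpow_neg hZ.le]
  field_simp
  exact mul_comm _ _

end

/-- For a Gaussian density `f` of `N(μ, Σ)` on `ℝ^d` with `Σ ≻ 0` and `p = d/(d+2)`, the
Zador functional `(∫ f(x)^p dx)^{(d+2)/d}` equals `2π · det(Σ)^{1/d} · ((d+2)/d)^{(d+2)/2}`. -/
theorem gaussian_zador_functional (d : ℕ) (hd : 1 ≤ d) (μ : Fin d → ℝ)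
    (S : Matrix (Fin d) (Fin d) ℝ) (hS : S.PosDef)
    (p : ℝ) (hp : p = (d : ℝ) / ((d : ℝ) + 2))
    (f : (Fin d → ℝ) → ℝ)
    (hf : ∀ x, f x = (2 * π) ^ (-(d : ℝ) / 2) * S.det ^ (-(1 : ℝ) / 2) *
      Real.exp (-(1 / 2) * ((x - μ) ⬝ᵥ S⁻¹.mulVec (x - μ)))) :
    (∫ x : Fin d → ℝ, f x ^ p) ^ (((d : ℝ) + 2) / d) =
      2 * π * S.det ^ ((1 : ℝ) / d) * (((d : ℝ) + 2) / d) ^ (((d : ℝ) + 2) / 2) := by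
  have hf' : f = multivariateGaussianPDFReal μ S := by
    ext x
    simp [hf, multivariateGaussianPDFReal]
  have hd0 : (0 : ℝ) < d := by exact_mod_cast hd
  have hdet := hS.det_pos
  subst hf' hp
  rw [integral_multivariateGaussianPDFReal_rpow μ hS (by positivity), Fintype.card_fin]
  have hexp : 1 - (d : ℝ) / (d + 2) = 2 / (d + 2) := by field_simp; ring
  rw [hexp, div_rpow (by positivity) (by positivity), ← rpow_mul (by positivity),
    ← rpow_mul (by positivity), mul_rpow (by positivity) (by positivity),
    ← rpow_mul (by positivity), sqrt_eq_rpow, ← rpow_mul hdet.le, ← inv_div ((d : ℝ) + 2) d,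
    inv_rpow (by positivity), div_inv_eq_mul]
  have hexp_two_pi : (d : ℝ) / 2 * (2 / (d + 2) * ((d + 2) / d)) = 1 := by field_simp
  have hexp_det : (1 : ℝ) / 2 * (2 / (d + 2) * ((d + 2) / d)) = 1 / d := by field_simp
  have hexp_ratio : (d : ℝ) / 2 * ((d + 2) / d) = (d + 2) / 2 := by field_simp
  rw [hexp_two_pi, hexp_det, hexp_ratio, rpow_one]
end

section
/- Let W₁, ..., W_k be i.i.d. nonnegative random variables whose common CDF satisfies P(W₁ ≤ a) ≤ C·a^α for all a ∈ [0, a₀], with C > 0 and α > 0. If a* := (1/(C(1+αk)))^{1/α} ≤ a₀, then E[min_{1≤i≤k} W_i] ≥ e^{-1/α} · (1/(C(1+αk)))^{1/α}. -/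
/-! With `a := (1/(C(1+αk)))^{1/α}` we have `C a^α = 1/(1+αk)`, so each `W_i` exceeds `a` with
probability at least `αk/(1+αk)`. By independence all of them do with probability at least
`(αk/(1+αk))^k ≥ e^{-1/α}`, and on that event `min_i W_i > a`; Markov's inequality gives
`E[min_i W_i] ≥ a e^{-1/α}`. -/

open MeasureTheory ProbabilityTheory

lemma Real.exp_neg_inv_le_div_one_add {t : ℝ} (ht : 0 < t) :
    Real.exp (-t⁻¹) ≤ t / (1 + t) :=
  calc Real.exp (-t⁻¹) = (Real.exp t⁻¹)⁻¹ := Real.exp_neg _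
    _ ≤ (t⁻¹ + 1)⁻¹ := inv_anti₀ (by positivity) (Real.add_one_le_exp _)
    _ = t / (1 + t) := by field_simp

lemma Real.exp_neg_one_div_le_pow {α : ℝ} (hα : 0 < α) (k : ℕ) :
    Real.exp (-1 / α) ≤ (α * k / (1 + α * k)) ^ k := by
  rcases k.eq_zero_or_pos with rfl | hk
  · simpa using div_nonpos_of_nonpos_of_nonneg (by norm_num : (-1 : ℝ) ≤ 0) hα.le
  have hαk : 0 < α * k := by positivity
  calc Real.exp (-1 / α) = Real.exp (-(α * k)⁻¹) ^ k := by
        rw [← Real.exp_nat_mul]; field_simp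
    _ ≤ (α * k / (1 + α * k)) ^ k :=
        pow_le_pow_left₀ (Real.exp_pos _).le (Real.exp_neg_inv_le_div_one_add hαk) k

section

variable {Ω : Type*} [MeasurableSpace Ω] {μ : Measure Ω}

lemma measure_lt_eq_of_map_eq {X Y : Ω → ℝ} (hX : Measurable X) (hY : Measurable Y)
    (h : μ.map X = μ.map Y) (a : ℝ) : μ {ω | a < X ω} = μ {ω | a < Y ω} := by
  simpa [Measure.map_apply, hX, hY, Set.preimage, Set.mem_Ioi] using congrArg (· (Set.Ioi a)) h

lemma ofReal_one_sub_le_measure_lt [IsProbabilityMeasure μ] {X : Ω → ℝ} (hX : Measurable X)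
    {a p : ℝ} (h : (μ {ω | X ω ≤ a}).toReal ≤ p) :
    ENNReal.ofReal (1 - p) ≤ μ {ω | a < X ω} := by
  have hcompl : {ω | a < X ω} = {ω | X ω ≤ a}ᶜ := by ext; simp
  rw [hcompl, prob_compl_eq_one_sub (measurableSet_le hX measurable_const),
    ENNReal.ofReal_le_iff_le_toReal (by simp),
    ENNReal.toReal_sub_of_le prob_le_one ENNReal.one_ne_top, ENNReal.toReal_one]
  linarith

lemma ofReal_mul_pow_card_le_lintegral_iInf {ι : Type*} [Fintype ι] [Nonempty ι]
    {W : ι → Ω → ℝ} (hmeas : ∀ i, Measurable (W i)) (hindep : iIndepFun W μ) {a : ℝ}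
    {p : ENNReal} (htail : ∀ i, p ≤ μ {ω | a < W i ω}) :
    ENNReal.ofReal a * p ^ Fintype.card ι ≤ ∫⁻ ω, ENNReal.ofReal (⨅ i, W i ω) ∂μ := by
  set S := ⋂ i, W i ⁻¹' Set.Ioi a
  have hS : MeasurableSet S := .iInter fun i => hmeas i measurableSet_Ioi
  have hprob : p ^ Fintype.card ι ≤ μ S := by
    have hprod := hindep.measure_inter_preimage_eq_mul Finset.univ
      (sets := fun _ => Set.Ioi a) (fun i _ => measurableSet_Ioi)
    simp only [Finset.mem_univ, Set.iInter_true] at hprod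
    rw [hprod, ← Finset.card_univ, ← Finset.prod_const]
    exact Finset.prod_le_prod' fun i _ => htail i
  calc ENNReal.ofReal a * p ^ Fintype.card ι ≤ ∫⁻ _ in S, ENNReal.ofReal a ∂μ := by
        rw [setLIntegral_const]; gcongr
    _ ≤ ∫⁻ ω in S, ENNReal.ofReal (⨅ i, W i ω) ∂μ :=
        setLIntegral_mono' hS fun ω hω =>
          ENNReal.ofReal_le_ofReal (le_ciInf fun i => (Set.mem_iInter.mp hω i).le)
    _ ≤ ∫⁻ ω, ENNReal.ofReal (⨅ i, W i ω) ∂μ := setLIntegral_le_lintegral _ _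

end

theorem min_iid_smallball_lower_bound_general {Ω : Type*} [MeasurableSpace Ω] (μ : Measure Ω)
    [IsProbabilityMeasure μ] (k : ℕ) (hk : 1 ≤ k) (C α a₀ : ℝ)
    (hC : 0 < C) (hα : 0 < α)
    (W : Fin k → Ω → ℝ) (hmeas : ∀ i, Measurable (W i))
    (hindep : iIndepFun W μ)
    (hid : ∀ i, μ.map (W i) = μ.map (W ⟨0, hk⟩))
    (hsmall : ∀ a ∈ Set.Icc (0 : ℝ) a₀, (μ {ω | W ⟨0, hk⟩ ω ≤ a}).toReal ≤ C * a ^ α)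
    (hastar : (1 / (C * (1 + α * k))) ^ (1 / α) ≤ a₀) :
    ENNReal.ofReal (Real.exp (-1 / α) * (1 / (C * (1 + α * k))) ^ (1 / α)) ≤
      ∫⁻ ω, ENNReal.ofReal (⨅ i, W i ω) ∂μ := by
  have hx : 0 < 1 / (C * (1 + α * k)) := by positivity
  set a := (1 / (C * (1 + α * k))) ^ (1 / α)
  have hCa : 1 - C * a ^ α = α * k / (1 + α * k) := by
    rw [← Real.rpow_mul hx.le, one_div_mul_cancel hα.ne', Real.rpow_one]
    field_simp
    ring
  have htail : ∀ i, ENNReal.ofReal (α * k / (1 + α * k)) ≤ μ {ω | a < W i ω} := fun i => by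
    rw [measure_lt_eq_of_map_eq (hmeas i) (hmeas _) (hid i), ← hCa]
    exact ofReal_one_sub_le_measure_lt (hmeas _) (hsmall a ⟨by positivity, hastar⟩)
  have : Nonempty (Fin k) := ⟨⟨0, hk⟩⟩
  calc ENNReal.ofReal (Real.exp (-1 / α) * a)
      ≤ ENNReal.ofReal (a * (α * k / (1 + α * k)) ^ k) := by
        rw [mul_comm]
        gcongr
        exact Real.exp_neg_one_div_le_pow hα k
    _ = ENNReal.ofReal a * ENNReal.ofReal (α * k / (1 + α * k)) ^ k := by
        rw [ENNReal.ofReal_mul (by positivity), ENNReal.ofReal_pow (by positivity)]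
    _ ≤ ∫⁻ ω, ENNReal.ofReal (⨅ i, W i ω) ∂μ := by
        simpa using ofReal_mul_pow_card_le_lintegral_iInf hmeas hindep htail

/-- If `W₁,...,W_k` are i.i.d. nonnegative with `P(W₁ ≤ a) ≤ C a^α` on `[0, a₀]` and
`a* = (1/(C(1+αk)))^{1/α} ≤ a₀`, then `E[min_i W_i] ≥ e^{-1/α} (1/(C(1+αk)))^{1/α}`. -/
theorem min_iid_smallball_lower_bound {Ω : Type*} [MeasurableSpace Ω] (μ : Measure Ω)
    [IsProbabilityMeasure μ] (k : ℕ) (hk : 1 ≤ k) (C α a₀ : ℝ)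
    (hC : 0 < C) (hα : 0 < α) (ha₀ : 0 < a₀)
    (W : Fin k → Ω → ℝ) (hmeas : ∀ i, Measurable (W i))
    (hnn : ∀ i ω, 0 ≤ W i ω)
    (hindep : iIndepFun W μ)
    (hid : ∀ i, μ.map (W i) = μ.map (W ⟨0, hk⟩))
    (hsmall : ∀ a ∈ Set.Icc (0 : ℝ) a₀, (μ {ω | W ⟨0, hk⟩ ω ≤ a}).toReal ≤ C * a ^ α)
    (hastar : (1 / (C * (1 + α * k))) ^ (1 / α) ≤ a₀) :
    ENNReal.ofReal (Real.exp (-1 / α) * (1 / (C * (1 + α * k))) ^ (1 / α)) ≤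
      ∫⁻ ω, ENNReal.ofReal (⨅ i, W i ω) ∂μ :=
  min_iid_smallball_lower_bound_general μ k hk C α a₀ hC hα W hmeas hindep hid hsmall hastar
end

section
/- Let X be a random element and, conditionally on X, let W₁, ..., W_k be i.i.d. nonnegative random variables. Suppose the averaged small-ball condition P(W₁ ≤ a) ≤ C a^α holds for a ∈ [0, a₀] (the unconditional probability). If a* = (1/(C(1+αk)))^{1/α} ≤ a₀, then E[min_{1≤i≤k} W_i] ≥ e^{-1/α}·(1/(C(1+αk)))^{1/α}. In particular E[min_i W_i] = Ω(k^{-1/α}). -/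
/-!
The threshold `a := (1 / (C (1 + α k)))^{1/α}` maximises `a (1 - C a^α)^k` and satisfies
`C a^α = 1 / (1 + α k)`. Markov's inequality gives
`E[min_i W_i] ≥ a · P(W_i > a for all i)`. Conditionally on `X` the events `{W_i > a}` are
independent with the common probability `p(X) := P(W₁ > a | X)`, so
`P(W_i > a for all i) = E[p(X)^k] ≥ (E p(X))^k = P(W₁ > a)^k ≥ (1 - C a^α)^k` by Jensen, and
`(1 - 1/(1 + α k))^k ≥ e^{-1/α}` because `1 + t ≤ e^t`.
-/

open MeasureTheory ProbabilityTheory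

lemma Real.exp_neg_one_div_le_one_sub_one_div_pow {α : ℝ} (hα : 0 < α) (k : ℕ) :
    Real.exp (-1 / α) ≤ (1 - 1 / (1 + α * k)) ^ k := by
  rcases Nat.eq_zero_or_pos k with rfl | hk
  · rw [pow_zero, Real.exp_le_one_iff]
    exact (div_neg_of_neg_of_pos (by norm_num) hα).le
  have hαk : 0 < α * k := by positivity
  have hexp : Real.exp (-1 / α) = Real.exp (-(1 / (α * k))) ^ k := by
    rw [← Real.exp_nat_mul]; congr 1; field_simp
  have hbase : 1 - 1 / (1 + α * k) = (1 + 1 / (α * k))⁻¹ := by field_simp; ring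
  rw [hexp, hbase, Real.exp_neg]
  gcongr
  linarith [Real.add_one_le_exp (1 / (α * k))]

lemma ofReal_mul_measure_le_lintegral_ofReal_iInf {Ω ι : Type*} [MeasurableSpace Ω]
    (μ : Measure Ω) [Countable ι] [Nonempty ι] {W : ι → Ω → ℝ} (hW : ∀ i, Measurable (W i))
    (a : ℝ) :
    ENNReal.ofReal a * μ (⋂ i, W i ⁻¹' Set.Ioi a) ≤ ∫⁻ ω, ENNReal.ofReal (⨅ i, W i ω) ∂μ := by
  have hS : MeasurableSet (⋂ i, W i ⁻¹' Set.Ioi a) :=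
    .iInter fun i => hW i measurableSet_Ioi
  calc ENNReal.ofReal a * μ (⋂ i, W i ⁻¹' Set.Ioi a)
      = ∫⁻ _ in ⋂ i, W i ⁻¹' Set.Ioi a, ENNReal.ofReal a ∂μ := (setLIntegral_const _ _).symm
    _ ≤ ∫⁻ ω in ⋂ i, W i ⁻¹' Set.Ioi a, ENNReal.ofReal (⨅ i, W i ω) ∂μ :=
        setLIntegral_mono' hS fun ω hω =>
          ENNReal.ofReal_le_ofReal (le_ciInf fun i => (Set.mem_iInter.mp hω i).le)
    _ ≤ _ := setLIntegral_le_lintegral _ _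

lemma integral_condExp_indicator_one {Ω : Type*} {m mΩ : MeasurableSpace Ω} {μ : Measure Ω}
    [IsFiniteMeasure μ] (hm : m ≤ mΩ) {t : Set Ω} (ht : MeasurableSet t) :
    ∫ ω, (μ⟦t | m⟧) ω ∂μ = μ.real t := by
  rw [integral_condExp hm, integral_indicator_const _ ht, smul_eq_mul, mul_one]

section CondIndep

variable {Ω ι β : Type*} {m mΩ : MeasurableSpace Ω} [StandardBorelSpace Ω] {hm : m ≤ mΩ}
  {μ : Measure Ω} [mβ : MeasurableSpace β] [Fintype ι] {W : ι → Ω → β} {s : Set β} {i₀ : ι}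

lemma condExp_iInter_preimage_ae_eq_pow [IsFiniteMeasure μ] (hW : ∀ i, Measurable (W i))
    (hind : iCondIndepFun m hm W μ) (hs : MeasurableSet s)
    (hid : ∀ i, μ⟦W i ⁻¹' s | m⟧ =ᵐ[μ] μ⟦W i₀ ⁻¹' s | m⟧) :
    μ⟦⋂ i, W i ⁻¹' s | m⟧ =ᵐ[μ] μ⟦W i₀ ⁻¹' s | m⟧ ^ Fintype.card ι := by
  have hprod := (iCondIndepFun_iff_condExp_inter_preimage_eq_mul (fun _ => mβ) W hW).mp hind
    Finset.univ (sets := fun _ => s) fun _ _ => hs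
  simp only [Finset.mem_univ, Set.iInter_true] at hprod
  filter_upwards [hprod, ae_all_iff.mpr hid] with ω hω hωid
  simp [hω, Finset.prod_apply, hωid]

lemma measureReal_preimage_pow_le_measureReal_iInter [IsProbabilityMeasure μ]
    (hW : ∀ i, Measurable (W i)) (hind : iCondIndepFun m hm W μ) (hs : MeasurableSet s)
    (hid : ∀ i, μ⟦W i ⁻¹' s | m⟧ =ᵐ[μ] μ⟦W i₀ ⁻¹' s | m⟧) :
    μ.real (W i₀ ⁻¹' s) ^ Fintype.card ι ≤ μ.real (⋂ i, W i ⁻¹' s) := by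
  have hpow := condExp_iInter_preimage_ae_eq_pow hW hind hs hid
  have hnonneg : 0 ≤ᵐ[μ] μ⟦W i₀ ⁻¹' s | m⟧ :=
    condExp_nonneg (.of_forall fun _ => Set.indicator_nonneg (fun _ _ => zero_le_one) _)
  calc μ.real (W i₀ ⁻¹' s) ^ Fintype.card ι
      = (∫ ω, (μ⟦W i₀ ⁻¹' s | m⟧) ω ∂μ) ^ Fintype.card ι := by
        rw [integral_condExp_indicator_one hm (hW i₀ hs)]
    _ ≤ ∫ ω, (μ⟦W i₀ ⁻¹' s | m⟧) ω ^ Fintype.card ι ∂μ :=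
        (convexOn_pow _).map_integral_le (continuous_pow _).continuousOn isClosed_Ici hnonneg
          integrable_condExp (integrable_condExp.congr hpow)
    _ = ∫ ω, (μ⟦⋂ i, W i ⁻¹' s | m⟧) ω ∂μ := integral_congr_ae hpow.symm
    _ = μ.real (⋂ i, W i ⁻¹' s) := integral_condExp_indicator_one hm (.iInter fun i => hW i hs)

end CondIndep

lemma condExp_preimage_ae_eq_of_condDistrib_ae_eq {Ω 𝓧 β : Type*} [MeasurableSpace Ω]
    [mX : MeasurableSpace 𝓧] [MeasurableSpace β] [StandardBorelSpace β] [Nonempty β]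
    {μ : Measure Ω} [IsFiniteMeasure μ] {X : Ω → 𝓧} (hX : Measurable X) {Y Y' : Ω → β}
    (hY : Measurable Y) (hY' : Measurable Y') (h : condDistrib Y X μ =ᵐ[μ.map X] condDistrib Y' X μ)
    {s : Set β} (hs : MeasurableSet s) :
    μ⟦Y ⁻¹' s | mX.comap X⟧ =ᵐ[μ] μ⟦Y' ⁻¹' s | mX.comap X⟧ := by
  filter_upwards [(condDistrib_ae_eq_condExp hX hY hs), condDistrib_ae_eq_condExp hX hY' hs,
    ae_of_ae_map hX.aemeasurable h] with ω hω hω' hωX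
  rw [← hω, ← hω', hωX]

theorem min_cond_iid_smallball_lower_bound_general {Ω 𝓧 : Type*} [MeasurableSpace Ω]
    [StandardBorelSpace Ω] [MeasurableSpace 𝓧] (μ : Measure Ω) [IsProbabilityMeasure μ]
    (X : Ω → 𝓧) (hX : Measurable X)
    (k : ℕ) (hk : 1 ≤ k) (C α a₀ : ℝ)
    (hC : 0 < C) (hα : 0 < α)
    (W : Fin k → Ω → ℝ) (hmeas : ∀ i, Measurable (W i))
    (hCindep : iCondIndepFun (MeasurableSpace.comap X inferInstance) hX.comap_le
      W μ)
    (hCid : ∀ i, ∀ᵐ x ∂(μ.map X), condDistrib (W i) X μ x = condDistrib (W ⟨0, hk⟩) X μ x)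
    (hsmall : ∀ a ∈ Set.Icc (0 : ℝ) a₀, (μ {ω | W ⟨0, hk⟩ ω ≤ a}).toReal ≤ C * a ^ α)
    (hastar : (1 / (C * (1 + α * k))) ^ (1 / α) ≤ a₀) :
    ENNReal.ofReal (Real.exp (-1 / α) * (1 / (C * (1 + α * k))) ^ (1 / α)) ≤
      ∫⁻ ω, ENNReal.ofReal (⨅ i, W i ω) ∂μ := by
  have : Nonempty (Fin k) := ⟨⟨0, hk⟩⟩
  set a := (1 / (C * (1 + α * k))) ^ (1 / α) with ha_def
  have ha : 0 ≤ a := by positivity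
  have hCa : C * a ^ α = 1 / (1 + α * k) := by
    rw [ha_def, one_div α, Real.rpow_inv_rpow (by positivity) hα.ne']
    field_simp
  have htail : 1 - 1 / (1 + α * k) ≤ μ.real (W ⟨0, hk⟩ ⁻¹' Set.Ioi a) := by
    rw [← Set.compl_Iic, Set.preimage_compl, probReal_compl_eq_one_sub (hmeas _ measurableSet_Iic),
      ← hCa]
    have hball : μ.real (W ⟨0, hk⟩ ⁻¹' Set.Iic a) ≤ C * a ^ α := hsmall a ⟨ha, hastar⟩
    linarith
  have hall : Real.exp (-1 / α) ≤ μ.real (⋂ i, W i ⁻¹' Set.Ioi a) := calc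
    Real.exp (-1 / α) ≤ (1 - 1 / (1 + α * k)) ^ k :=
      Real.exp_neg_one_div_le_one_sub_one_div_pow hα k
    _ ≤ μ.real (W ⟨0, hk⟩ ⁻¹' Set.Ioi a) ^ Fintype.card (Fin k) := by
      rw [Fintype.card_fin]
      gcongr
      exact sub_nonneg.2 (div_le_one_of_le₀ (le_add_of_nonneg_right (by positivity)) (by positivity))
    _ ≤ _ := measureReal_preimage_pow_le_measureReal_iInter hmeas hCindep measurableSet_Ioi
      fun i => condExp_preimage_ae_eq_of_condDistrib_ae_eq hX (hmeas i) (hmeas _) (hCid i)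
        measurableSet_Ioi
  calc ENNReal.ofReal (Real.exp (-1 / α) * a)
      = ENNReal.ofReal a * ENNReal.ofReal (Real.exp (-1 / α)) := by
        rw [mul_comm, ENNReal.ofReal_mul ha]
    _ ≤ ENNReal.ofReal a * μ (⋂ i, W i ⁻¹' Set.Ioi a) := by
        gcongr
        exact ENNReal.ofReal_le_of_le_toReal hall
    _ ≤ _ := ofReal_mul_measure_le_lintegral_ofReal_iInf μ hmeas a

/-- Theorem 2 (decentralized small-ball converse): if `W₁,...,W_k` are nonnegative and
conditionally i.i.d. given a random element `X`, and the averaged small-ball condition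
`P(W₁ ≤ a) ≤ C a^α` holds for `a ∈ [0, a₀]`, and `a* = (1/(C(1+αk)))^{1/α} ≤ a₀`, then
`E[min_i W_i] ≥ e^{-1/α} (1/(C(1+αk)))^{1/α}`. -/
theorem min_cond_iid_smallball_lower_bound {Ω 𝓧 : Type*} [MeasurableSpace Ω]
    [StandardBorelSpace Ω] [MeasurableSpace 𝓧] (μ : Measure Ω) [IsProbabilityMeasure μ]
    (X : Ω → 𝓧) (hX : Measurable X)
    (k : ℕ) (hk : 1 ≤ k) (C α a₀ : ℝ)
    (hC : 0 < C) (hα : 0 < α) (ha₀ : 0 < a₀)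
    (W : Fin k → Ω → ℝ) (hmeas : ∀ i, Measurable (W i))
    (hnn : ∀ i ω, 0 ≤ W i ω)
    (hCindep : iCondIndepFun (MeasurableSpace.comap X inferInstance) hX.comap_le
      W μ)
    (hCid : ∀ i, ∀ᵐ x ∂(μ.map X), condDistrib (W i) X μ x = condDistrib (W ⟨0, hk⟩) X μ x)
    (hsmall : ∀ a ∈ Set.Icc (0 : ℝ) a₀, (μ {ω | W ⟨0, hk⟩ ω ≤ a}).toReal ≤ C * a ^ α)
    (hastar : (1 / (C * (1 + α * k))) ^ (1 / α) ≤ a₀) :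
    ENNReal.ofReal (Real.exp (-1 / α) * (1 / (C * (1 + α * k))) ^ (1 / α)) ≤
      ∫⁻ ω, ENNReal.ofReal (⨅ i, W i ω) ∂μ :=
  min_cond_iid_smallball_lower_bound_general μ X hX k hk C α a₀ hC hα W hmeas hCindep hCid hsmall
    hastar
end

section
/- If Z is a real-valued random variable (conditionally on any event) with density bounded by M = (2πσ_G²)^{-1/2} everywhere, then for all a ≥ 0, P(Z² ≤ a) ≤ 2M·√a, and consequently for i.i.d. copies W_i = Z_i², E[min_{1≤i≤k} W_i] ≥ e^{-2}·(1/(2M(1+k/2)))² = 2πσ_G²/(e²(k+2)²). -/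
open MeasureTheory ProbabilityTheory Real

/-!
A density bounded by `M` gives the law of `Z` mass at most `2M√a` on `[-√a, √a] ⊇ {z² ≤ a}`.
For independent `Wᵢ` with `P(Wᵢ ≤ a) ≤ C a^α`, pick `t` with `C t^α = p := 1/(1 + kα)`: then
`min Wᵢ > t` with probability at least `(1 - p)^k ≥ e^{-1/α}`, and Markov's inequality gives
`E[min Wᵢ] ≥ e^{-1/α} t`. Here `α = 1/2`, `C = 2M` and `M² = (2πσ²)⁻¹`.
-/

lemma Real.exp_neg_le_one_sub_div_add_pow {c : ℝ} (hc : 0 ≤ c) (n : ℕ) :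
    exp (-c) ≤ (1 - c / (n + c)) ^ n := by
  rcases n.eq_zero_or_pos with rfl | hn
  · simpa using hc
  have hn' : (0 : ℝ) < n := by exact_mod_cast hn
  calc exp (-c) = (exp (c / n))⁻¹ ^ n := by
        rw [← exp_neg, ← exp_nat_mul]; congr 1; field_simp
    _ ≤ (c / n + 1)⁻¹ ^ n := by
        gcongr
        exact add_one_le_exp _
    _ = (1 - c / (n + c)) ^ n := by
        congr 1; field_simp; ring

lemma Real.rpow_neg_half_sq {A : ℝ} (hA : 0 ≤ A) : (A ^ (-(1 : ℝ) / 2)) ^ 2 = A⁻¹ := by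
  rw [← rpow_natCast, ← rpow_mul hA]
  norm_num [rpow_neg_one]

section

variable {Ω : Type*} [MeasurableSpace Ω] {μ : Measure Ω}

lemma withDensity_ofReal_le_smul {α : Type*} [MeasurableSpace α] (ν : Measure α) {f : α → ℝ}
    {M : ℝ} (hf : ∀ x, f x ≤ M) :
    ν.withDensity (fun x => ENNReal.ofReal (f x)) ≤ ENNReal.ofReal M • ν := by
  rw [← withDensity_const]
  exact withDensity_mono (ae_of_all _ fun x => ENNReal.ofReal_le_ofReal (hf x))

lemma measure_sq_le_le_of_density_le {X : Ω → ℝ} (hX : Measurable X) {f : ℝ → ℝ} {M : ℝ}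
    (hM : 0 ≤ M) (hdens : μ.map X = volume.withDensity fun x => ENNReal.ofReal (f x))
    (hf : ∀ x, f x ≤ M) (a : ℝ) :
    μ {ω | X ω ^ 2 ≤ a} ≤ ENNReal.ofReal (2 * M * √a) :=
  calc μ {ω | X ω ^ 2 ≤ a} ≤ μ (X ⁻¹' Set.Icc (-√a) √a) :=
        measure_mono fun ω hω => abs_le.mp (abs_le_sqrt hω)
    _ ≤ μ.map X (Set.Icc (-√a) √a) := Measure.le_map_apply hX.aemeasurable _
    _ ≤ (ENNReal.ofReal M • volume) (Set.Icc (-√a) √a) :=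
        hdens ▸ withDensity_ofReal_le_smul volume hf _
    _ = ENNReal.ofReal (2 * M * √a) := by
        rw [Measure.smul_apply, volume_Icc, smul_eq_mul, ← ENNReal.ofReal_mul hM]
        ring_nf

variable [IsProbabilityMeasure μ]

lemma le_lintegral_iInf_of_iIndepFun {ι : Type*} [Fintype ι] [Nonempty ι] {W : ι → Ω → ℝ}
    (hW : ∀ i, Measurable (W i)) (hindep : iIndepFun W μ) {t p : ℝ} (hp₀ : 0 ≤ p)
    (hp₁ : p ≤ 1) (hsmall : ∀ i, μ {ω | W i ω ≤ t} ≤ ENNReal.ofReal p) :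
    ENNReal.ofReal ((1 - p) ^ Fintype.card ι * t) ≤ ∫⁻ ω, ENNReal.ofReal (⨅ i, W i ω) ∂μ := by
  set S := ⋂ i, W i ⁻¹' Set.Ioi t
  have hfactor : ∀ i, ENNReal.ofReal (1 - p) ≤ μ (W i ⁻¹' Set.Ioi t) := fun i => by
    rw [← Set.compl_Iic, Set.preimage_compl, prob_compl_eq_one_sub (hW i measurableSet_Iic),
      ENNReal.ofReal_sub _ hp₀, ENNReal.ofReal_one]
    exact tsub_le_tsub_left (hsmall i) 1
  have hS : ENNReal.ofReal ((1 - p) ^ Fintype.card ι) ≤ μ S := by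
    rw [hindep.meas_iInter fun i => ⟨_, measurableSet_Ioi, rfl⟩,
      ENNReal.ofReal_pow (by linarith)]
    exact Finset.pow_card_le_prod _ _ _ fun i _ => hfactor i
  have hS_sub : S ⊆ {ω | ENNReal.ofReal t ≤ ENNReal.ofReal (⨅ i, W i ω)} := fun ω hω =>
    ENNReal.ofReal_le_ofReal (le_ciInf fun i => (Set.mem_iInter.mp hω i).le)
  calc ENNReal.ofReal ((1 - p) ^ Fintype.card ι * t)
      = ENNReal.ofReal t * ENNReal.ofReal ((1 - p) ^ Fintype.card ι) := by
        rw [ENNReal.ofReal_mul (by bound), mul_comm]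
    _ ≤ ENNReal.ofReal t * μ {ω | ENNReal.ofReal t ≤ ENNReal.ofReal (⨅ i, W i ω)} := by
        gcongr
        exact hS.trans (measure_mono hS_sub)
    _ ≤ ∫⁻ ω, ENNReal.ofReal (⨅ i, W i ω) ∂μ :=
        mul_meas_ge_le_lintegral₀ (Measurable.iInf hW).ennreal_ofReal.aemeasurable _

lemma le_lintegral_iInf_of_measure_le_mul_rpow {ι : Type*} [Fintype ι] [Nonempty ι]
    {W : ι → Ω → ℝ} (hW : ∀ i, Measurable (W i)) (hindep : iIndepFun W μ) {α C : ℝ}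
    (hα : 0 < α) (hC : 0 ≤ C)
    (hsmall : ∀ i a, 0 ≤ a → μ {ω | W i ω ≤ a} ≤ ENNReal.ofReal (C * a ^ α)) :
    ENNReal.ofReal (exp (-α⁻¹) * (1 / (C * (1 + Fintype.card ι * α))) ^ α⁻¹) ≤
      ∫⁻ ω, ENNReal.ofReal (⨅ i, W i ω) ∂μ := by
  set n := Fintype.card ι
  set p := 1 / (1 + n * α)
  set q := 1 / (C * (1 + n * α))
  have hq : 0 ≤ q := by positivity
  have hp₁ : p ≤ 1 := div_le_one_of_le₀ (le_add_of_nonneg_right (by positivity)) (by positivity)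
  have hCq : C * q ≤ p := by
    simp only [p, q]
    rw [one_div, one_div, mul_inv, ← mul_assoc]
    exact mul_le_of_le_one_left (by positivity) mul_inv_le_one
  have hexp : exp (-α⁻¹) ≤ (1 - p) ^ n := by
    convert exp_neg_le_one_sub_div_add_pow (inv_nonneg.2 hα.le) n using 3
    simp only [p]
    field_simp
    ring
  calc ENNReal.ofReal (exp (-α⁻¹) * q ^ α⁻¹) ≤ ENNReal.ofReal ((1 - p) ^ n * q ^ α⁻¹) := by
        gcongr
    _ ≤ ∫⁻ ω, ENNReal.ofReal (⨅ i, W i ω) ∂μ :=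
        le_lintegral_iInf_of_iIndepFun hW hindep (by positivity) hp₁ fun i =>
          (hsmall i _ (by positivity)).trans
            (ENNReal.ofReal_le_ofReal (by rwa [rpow_inv_rpow hq hα.ne']))

end

theorem scalar_gaussian_benchmark_lower_bound_general {Ω : Type*} [MeasurableSpace Ω]
    (μ : Measure Ω) [IsProbabilityMeasure μ]
    (k : ℕ) (hk : 1 ≤ k) (σG : ℝ)
    (M : ℝ) (hM : M = (2 * π * σG ^ 2) ^ (-(1 : ℝ) / 2))
    (Z : Fin k → Ω → ℝ) (hmeas : ∀ i, Measurable (Z i))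
    (hindep : iIndepFun Z μ)
    (f : Fin k → ℝ → ℝ)
    (hdens : ∀ i, μ.map (Z i) = volume.withDensity fun x => ENNReal.ofReal (f i x))
    (hbd : ∀ i x, f i x ≤ M) :
    (∀ i, ∀ a : ℝ, 0 ≤ a → (μ {ω | (Z i ω) ^ 2 ≤ a}).toReal ≤ 2 * M * Real.sqrt a) ∧
    Real.exp (-2) * (1 / (2 * M * (1 + (k : ℝ) / 2))) ^ 2
      = 2 * π * σG ^ 2 / (Real.exp 2 * ((k : ℝ) + 2) ^ 2) ∧
    ENNReal.ofReal (2 * π * σG ^ 2 / (Real.exp 2 * ((k : ℝ) + 2) ^ 2)) ≤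
      ∫⁻ ω, ENNReal.ofReal (⨅ i, (Z i ω) ^ 2) ∂μ := by
  have hA : 0 ≤ 2 * π * σG ^ 2 := by positivity
  have hM₀ : 0 ≤ M := hM ▸ rpow_nonneg hA _
  have hsmall : ∀ i a, μ {ω | Z i ω ^ 2 ≤ a} ≤ ENNReal.ofReal (2 * M * √a) := fun i =>
    measure_sq_le_le_of_density_le (hmeas i) hM₀ (hdens i) (hbd i)
  have hM₂ : M ^ 2 = (2 * π * σG ^ 2)⁻¹ := hM ▸ rpow_neg_half_sq hA
  have hconst : exp (-2) * (1 / (2 * M * (1 + (k : ℝ) / 2))) ^ 2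
      = 2 * π * σG ^ 2 / (exp 2 * ((k : ℝ) + 2) ^ 2) := by
    rw [show 2 * M * (1 + (k : ℝ) / 2) = M * (k + 2) by ring, div_pow, one_pow, mul_pow,
      hM₂, one_div, mul_inv, inv_inv, exp_neg, div_eq_mul_inv, mul_inv]
    ring
  refine ⟨fun i a _ => ENNReal.toReal_le_of_le_ofReal (by positivity) (hsmall i a), hconst, ?_⟩
  have : Nonempty (Fin k) := ⟨⟨0, hk⟩⟩
  have hmin := le_lintegral_iInf_of_measure_le_mul_rpow (fun i => (hmeas i).pow_const 2)
    (hindep.comp _ fun _ => measurable_id.pow_const 2) one_half_pos (by positivity : 0 ≤ 2 * M)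
    fun i a _ => by rw [← sqrt_eq_rpow]; exact hsmall i a
  rw [← hconst]
  convert hmin using 4 <;> norm_num [mul_one_div]

/-- If `Z₁,...,Z_k` are i.i.d. real random variables each with a density bounded by
`M = (2πσ_G²)^{-1/2}`, then `P(Z_i² ≤ a) ≤ 2M√a` for all `a ≥ 0`, and for `W_i = Z_i²`,
`E[min_i W_i] ≥ e^{-2}(1/(2M(1+k/2)))² = 2πσ_G²/(e²(k+2)²)`. -/
theorem scalar_gaussian_benchmark_lower_bound {Ω : Type*} [MeasurableSpace Ω]
    (μ : Measure Ω) [IsProbabilityMeasure μ]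
    (k : ℕ) (hk : 1 ≤ k) (σG : ℝ) (hσ : 0 < σG)
    (M : ℝ) (hM : M = (2 * π * σG ^ 2) ^ (-(1 : ℝ) / 2))
    (Z : Fin k → Ω → ℝ) (hmeas : ∀ i, Measurable (Z i))
    (hindep : iIndepFun Z μ)
    (hid : ∀ i, μ.map (Z i) = μ.map (Z ⟨0, hk⟩))
    (f : Fin k → ℝ → ℝ) (hfnn : ∀ i x, 0 ≤ f i x)
    (hdens : ∀ i, μ.map (Z i) = volume.withDensity fun x => ENNReal.ofReal (f i x))
    (hbd : ∀ i x, f i x ≤ M) :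
    (∀ i, ∀ a : ℝ, 0 ≤ a → (μ {ω | (Z i ω) ^ 2 ≤ a}).toReal ≤ 2 * M * Real.sqrt a) ∧
    Real.exp (-2) * (1 / (2 * M * (1 + (k : ℝ) / 2))) ^ 2
      = 2 * π * σG ^ 2 / (Real.exp 2 * ((k : ℝ) + 2) ^ 2) ∧
    ENNReal.ofReal (2 * π * σG ^ 2 / (Real.exp 2 * ((k : ℝ) + 2) ^ 2)) ≤
      ∫⁻ ω, ENNReal.ofReal (⨅ i, (Z i ω) ^ 2) ∂μ :=
  scalar_gaussian_benchmark_lower_bound_general μ k hk σG M hM Z hmeas hindep f hdens hbd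
end
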